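/- If the two-column root configuration ĈC' satisfies the Non-overlapping Condition, then for any HHL filling CC' = σ.ĈC' with σ ∈ A(β), and any entry aᵢ of the left column, the transposition (b_{j_i} < aᵢ) (where b_{j_i} is the largest pivot entry strictly less than aᵢ) is the only possible legal transposition involving aᵢ that can be applied to CC'. -/

import Mathlib

/-- Two-column HHL filling condition. -/
def HHL2 (c c' : ℕ) (C : Fin c → ℕ) (C' : Fin c' → ℕ) : Prop :=
  Function.Injective C ∧ Function.Injective C' ∧
  (∀ (i : Fin c) (k : Fin c'), (k : ℕ) < (i : ℕ) → C i ≠ C' k) ∧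
  (∀ (i : Fin c) (h : (i : ℕ) < c'), C i ≤ C' ⟨i, h⟩)

/-- Row `i` is a pivot row of the two-column configuration `CC'`:
either the left entry is strictly smaller than the right entry, or the row
lies below the bottom of the right column. -/
def PivotRow (c c' : ℕ) (C : Fin c → ℕ) (C' : Fin c' → ℕ) (i : Fin c) : Prop :=
  c' ≤ (i : ℕ) ∨ ∃ h : (i : ℕ) < c', C i < C' ⟨i, h⟩

/-- The set of pivot entries of the left column. -/
def pivotEntries (c c' : ℕ) (C : Fin c → ℕ) (C' : Fin c' → ℕ) : Set ℕ :=
  {x | ∃ i : Fin c, PivotRow c c' C C' i ∧ C i = x}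

/-- Failure of the Non-overlapping Condition: two distinct pivot rows whose
pivot intervals `[b_j, d_j]` (with `d_j = ∞` when the right entry is absent)
intersect. -/
def Overlap (c c' : ℕ) (C : Fin c → ℕ) (C' : Fin c' → ℕ) : Prop :=
  ∃ i j : Fin c, i ≠ j ∧ PivotRow c c' C C' i ∧ PivotRow c c' C C' j ∧
    ∃ z : ℕ, C i ≤ z ∧ (∀ h : (i : ℕ) < c', z ≤ C' ⟨i, h⟩) ∧
      C j ≤ z ∧ (∀ h : (j : ℕ) < c', z ≤ C' ⟨j, h⟩)

/-! Let `b = C i₁` sit in row `i` of the root and suppose a pivot entry `b'` with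
`b < b' < C i₂` existed. Non-overlap forces row `i` to have a right entry `t` with `t < b'`.
In the root, the entries exceeding `t` fill exactly the rows whose right entry exceeds `t`
(or is absent): a row of that kind holding an entry `≤ t` would be a pivot row whose interval
contains `t`, as does that of row `i`. In `C` the same number of entries exceed `t`, again only
in such rows, yet row `i₁` is such a row (its right entry is at least `C i₂`) holding `b ≤ t`.
-/

open Finset

theorem Finset.card_filter_comp_eq_of_range_eq {ι β : Type*} [Fintype ι] [DecidableEq β]
    {f g : ι → β} (hf : Function.Injective f) (hg : Function.Injective g)
    (hfg : Set.range f = Set.range g) (p : β → Prop) [DecidablePred p] :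
    #{k | p (f k)} = #{k | p (g k)} := by
  have himage : univ.image f = univ.image g := Finset.coe_injective (by simpa using hfg)
  rw [← card_image_of_injective _ hf, ← card_image_of_injective _ hg, ← filter_image,
    ← filter_image, himage]

section PivotIntervals

variable {c c' : ℕ} {C' : Fin c' → ℕ}

/-- `z` lies in the pivot interval `[C i, C' i]` of row `i`, read as `[C i, ∞)` when the row
has no right entry. -/
def InPivotInterval (C : Fin c → ℕ) (C' : Fin c' → ℕ) (i : Fin c) (z : ℕ) : Prop :=
  C i ≤ z ∧ ∀ h : (i : ℕ) < c', z ≤ C' ⟨i, h⟩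

/-- A row with no right entry counts as having right entry `∞`. -/
def rowsRightAbove (c : ℕ) (C' : Fin c' → ℕ) (t : ℕ) : Finset (Fin c) :=
  {k | ∀ h : (k : ℕ) < c', t < C' ⟨k, h⟩}

theorem mem_rowsRightAbove {t : ℕ} {k : Fin c} :
    k ∈ rowsRightAbove c C' t ↔ ∀ h : (k : ℕ) < c', t < C' ⟨k, h⟩ := by
  simp [rowsRightAbove]

theorem PivotRow.inPivotInterval {C : Fin c → ℕ} {i : Fin c} (hi : PivotRow c c' C C' i) :
    InPivotInterval C C' i (C i) := by
  refine ⟨le_rfl, fun h => ?_⟩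
  rcases hi with hle | ⟨_, hlt⟩
  · omega
  · exact hlt.le

theorem eq_of_not_overlap {C : Fin c → ℕ} (hno : ¬ Overlap c c' C C') {i j : Fin c}
    (hi : PivotRow c c' C C' i) (hj : PivotRow c c' C C' j) {z : ℕ}
    (hzi : InPivotInterval C C' i z) (hzj : InPivotInterval C C' j z) : i = j := by
  by_contra hij
  exact hno ⟨i, j, hij, hi, hj, z, hzi.1, hzi.2, hzj.1, hzj.2⟩

theorem exists_right_lt_of_not_overlap {C : Fin c → ℕ} (hno : ¬ Overlap c c' C C')
    {i j : Fin c} (hi : PivotRow c c' C C' i) (hj : PivotRow c c' C C' j) (hij : C i < C j) :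
    ∃ h : (i : ℕ) < c', C' ⟨i, h⟩ < C j := by
  by_contra! hle
  have : i = j := eq_of_not_overlap hno hi hj ⟨hij.le, hle⟩ hj.inPivotInterval
  exact hij.ne (congrArg C this)

theorem HHL2.filter_lt_subset_rowsRightAbove {C : Fin c → ℕ} (hC : HHL2 c c' C C') (t : ℕ) :
    ({k | t < C k} : Finset (Fin c)) ⊆ rowsRightAbove c C' t := by
  intro k hk
  rw [mem_filter] at hk
  exact mem_rowsRightAbove.2 fun h => hk.2.trans_le (hC.2.2.2 k h)

theorem HHL2.filter_lt_eq_rowsRightAbove {C : Fin c → ℕ} (hC : HHL2 c c' C C')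
    (hno : ¬ Overlap c c' C C') {i : Fin c} (hi : PivotRow c c' C C' i) (hic : (i : ℕ) < c') :
    ({k | C' ⟨i, hic⟩ < C k} : Finset (Fin c)) = rowsRightAbove c C' (C' ⟨i, hic⟩) := by
  set t := C' ⟨i, hic⟩
  refine (hC.filter_lt_subset_rowsRightAbove t).antisymm fun k hk => ?_
  rw [mem_rowsRightAbove] at hk
  rw [mem_filter]
  refine ⟨mem_univ k, not_le.1 fun hkt => ?_⟩
  have hk_pivot : PivotRow c c' C C' k := by
    by_cases hkc : (k : ℕ) < c'
    · exact Or.inr ⟨hkc, hkt.trans_lt (hk hkc)⟩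
    · exact Or.inl (not_lt.1 hkc)
  have hik : i = k := eq_of_not_overlap hno hi hk_pivot
    ⟨hi.inPivotInterval.2 hic, fun _ => le_rfl⟩ ⟨hkt, fun h => (hk h).le⟩
  subst hik
  exact (hk hic).false

end PivotIntervals

theorem unique_legal_transposition_general (c c' : ℕ)
    (C' : Fin c' → ℕ) (Croot : Fin c → ℕ)
    (hroot : HHL2 c c' Croot C')
    (hno : ¬ Overlap c c' Croot C')
    (C : Fin c → ℕ) (hCarr : Set.range C = Set.range Croot)
    (hC : HHL2 c c' C C') :
    ∀ i₁ i₂ : Fin c, C i₁ ∈ pivotEntries c c' Croot C' → C i₁ < C i₂ →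
      HHL2 c c' (C ∘ Equiv.swap i₁ i₂) C' →
      ∀ b' ∈ pivotEntries c c' Croot C', b' < C i₂ → b' ≤ C i₁ := by
  rintro i₁ i₂ ⟨i, hi, hCi⟩ - hswap b' ⟨j, hj, rfl⟩ hb'
  by_contra! hb
  obtain ⟨hic, htb'⟩ := exists_right_lt_of_not_overlap hno hi hj (hCi ▸ hb)
  set t := C' ⟨i, hic⟩
  have hi₁_mem : i₁ ∈ rowsRightAbove c C' t := mem_rowsRightAbove.2 fun h => by
    have hswap_row : C i₂ ≤ C' ⟨i₁, h⟩ := by simpa using hswap.2.2.2 i₁ h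
    omega
  have hi₁_not_mem : i₁ ∉ ({k | t < C k} : Finset (Fin c)) := by
    have : Croot i ≤ t := hi.inPivotInterval.2 hic
    simp only [mem_filter, mem_univ, true_and, not_lt]
    omega
  have hcard : #{k | t < C k} = #(rowsRightAbove c C' t) := by
    rw [Finset.card_filter_comp_eq_of_range_eq hC.1 hroot.1 hCarr,
      hroot.filter_lt_eq_rowsRightAbove hno hi hic]
  exact hcard.not_lt (card_lt_card <| (ssubset_iff_of_subset
    (hC.filter_lt_subset_rowsRightAbove t)).2 ⟨i₁, hi₁_mem, hi₁_not_mem⟩)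

/-- Proposition 4.3: if the root configuration `Croot C'` satisfies the
Non-overlapping Condition, then for any HHL rearrangement `CC'` of it, the only
possible legal transposition involving an entry `aᵢ = C i₂` is the one with the
largest pivot entry strictly less than `aᵢ`: any legal swap of `aᵢ` with a
pivot entry `C i₁ < aᵢ` forces `C i₁` to dominate every pivot entry below
`aᵢ`. -/
theorem unique_legal_transposition (c c' : ℕ) (hcc : c = c' ∨ c = c' + 1)
    (C' : Fin c' → ℕ) (Croot : Fin c → ℕ)
    (hroot : HHL2 c c' Croot C')
    (hmatch : ∀ (i : Fin c) (j : Fin c'), Croot i = C' j → (i : ℕ) = (j : ℕ))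
    (horder : ∀ (i i' : Fin c) (hi : (i : ℕ) < c') (hi' : (i' : ℕ) < c'),
      (∀ j : Fin c', Croot i ≠ C' j) → (∀ j : Fin c', Croot i' ≠ C' j) →
      (Croot i < Croot i' ↔ C' ⟨(i : ℕ), hi⟩ < C' ⟨(i' : ℕ), hi'⟩))
    (hbottom : ∀ i : Fin c, (i : ℕ) = c' →
      ∀ i' : Fin c, (∀ j : Fin c', Croot i' ≠ C' j) → Croot i' ≤ Croot i)
    (hno : ¬ Overlap c c' Croot C')
    (C : Fin c → ℕ) (hCarr : Set.range C = Set.range Croot)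
    (hC : HHL2 c c' C C') :
    ∀ i₁ i₂ : Fin c, C i₁ ∈ pivotEntries c c' Croot C' → C i₁ < C i₂ →
      HHL2 c c' (C ∘ Equiv.swap i₁ i₂) C' →
      ∀ b' ∈ pivotEntries c c' Croot C', b' < C i₂ → b' ≤ C i₁ :=
  unique_legal_transposition_general c c' C' Croot hroot hno C hCarr hC
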